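/- The map β ↦ c(β) = ∫_ℝ f₀^{(β)}(y) dy is even and strictly decreasing on [0, π), where f₀^{(β)}(y) = (1/√2)√( y⁴/4 + cos β + √(1 + (cos β) y⁴/2 + y⁸/16) ) − y²/2. Moreover f₀^{(β)}(y) > 0 for all y whenever |β| ≤ π/2, so c(β) > 0 for |β| ≤ π/2. -/
import Mathlib

open MeasureTheory

/-- The function f₀^{(β)} appearing in the asymptotics along the ray arg(-η) = β. -/
noncomputable def f0beta (β y : ℝ) : ℝ :=
  (1 / Real.sqrt 2) *
    Real.sqrt (y ^ 4 / 4 + Real.cos β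
      + Real.sqrt (1 + Real.cos β * y ^ 4 / 2 + y ^ 8 / 16))
    - y ^ 2 / 2

/-- c(β) = ∫_ℝ f₀^{(β)}(y) dy. -/
noncomputable def cbeta (β : ℝ) : ℝ := ∫ y : ℝ, f0beta β y


lemma radicand_nonneg {c : ℝ} (hc1 : -1 ≤ c) (y : ℝ) :
    0 ≤ 1 + c * y ^ 4 / 2 + y ^ 8 / 16 := by
  nlinarith [sq_nonneg (1 - y ^ 4 / 4), sq_nonneg (y ^ 2), sq_nonneg (y ^ 4)]

lemma A_nonneg {c : ℝ} (hc1 : -1 ≤ c) (hc2 : c ≤ 1) (y : ℝ) :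
    0 ≤ y ^ 4 / 4 + c + Real.sqrt (1 + c * y ^ 4 / 2 + y ^ 8 / 16) := by
  set s := Real.sqrt (1 + c * y ^ 4 / 2 + y ^ 8 / 16) with hs
  have hs0 : 0 ≤ s := Real.sqrt_nonneg _
  have hs2 : s ^ 2 = 1 + c * y ^ 4 / 2 + y ^ 8 / 16 :=
    Real.sq_sqrt (radicand_nonneg hc1 y)
  nlinarith [sq_nonneg (y ^ 2), sq_nonneg (s + y ^ 4 / 4 + c), sq_nonneg (s - y ^ 4 / 4 - c)]

set_option maxHeartbeats 1000000 in
lemma bound_key {c s u y : ℝ} (hc1 : -1 ≤ c) (hc2 : c ≤ 1)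
    (hs0 : 0 ≤ s) (hs2 : s ^ 2 = 1 + c * y ^ 4 / 2 + y ^ 8 / 16)
    (hu0 : 0 ≤ u) (hu2 : u ^ 2 = (y ^ 4 / 4 + c + s) / 2) :
    |u - y ^ 2 / 2| * (1 + y ^ 2) ≤ 25 := by
  have hy2 : (0:ℝ) ≤ y ^ 2 := sq_nonneg y
  have hy4 : (0:ℝ) ≤ y ^ 4 := by positivity
  -- s + y^4/4 ≥ 1
  have key1 : 1 ≤ s + y ^ 4 / 4 := by
    rcases le_or_gt (y ^ 4) 4 with h | h
    · nlinarith [sq_nonneg (s - (1 - y ^ 4 / 4)), sq_nonneg (s + 1 - y ^ 4 / 4)]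
    · linarith
  -- |c + s - y^4/4| ≤ 4
  have key2a : c + s - y ^ 4 / 4 ≤ 4 := by
    nlinarith [mul_nonneg hs0 hy4]
  have key2b : -4 ≤ c + s - y ^ 4 / 4 := by
    nlinarith [mul_nonneg hs0 hy4]
  have hM : (u - y ^ 2 / 2) * (u + y ^ 2 / 2) = (c + s - y ^ 4 / 4) / 2 := by
    nlinarith [hu2]
  rcases le_or_gt (y ^ 2) 2 with hy | hy
  · -- small y: u ≤ 3/2 + ... just u² ≤ y^4/4+1 ≤ 2
    have hsle : s ≤ 1 + y ^ 4 / 4 := by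
      nlinarith [sq_nonneg (s - (1 + y ^ 4 / 4))]
    have hu : u ≤ 2 := by nlinarith
    rcases abs_cases (u - y ^ 2 / 2) with ⟨he, _⟩ | ⟨he, _⟩ <;> rw [he] <;> nlinarith
  · -- large y
    rcases abs_cases (u - y ^ 2 / 2) with ⟨he, h0⟩ | ⟨he, h0⟩ <;> rw [he]
    · have hd : (0:ℝ) ≤ u - y ^ 2 / 2 := by linarith
      have h1 : (u - y ^ 2 / 2) * (y ^ 2 / 2) ≤ 2 := by
        nlinarith [mul_nonneg hd hu0]
      have h2 : u - y ^ 2 / 2 ≤ 2 := by nlinarith [mul_nonneg hd (by linarith : (0:ℝ) ≤ y ^ 2 / 2 - 1)]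
      nlinarith [h1, h2]
    · have hd : (0:ℝ) ≤ y ^ 2 / 2 - u := by linarith
      have h1 : (y ^ 2 / 2 - u) * (y ^ 2 / 2) ≤ 2 := by
        nlinarith [mul_nonneg hd hu0]
      have h2 : y ^ 2 / 2 - u ≤ 2 := by nlinarith [mul_nonneg hd (by linarith : (0:ℝ) ≤ y ^ 2 / 2 - 1)]
      nlinarith [h1, h2]

lemma f0beta_abs_le (β y : ℝ) : |f0beta β y| ≤ 25 * (1 + y ^ 2)⁻¹ := by
  have hc1 : -1 ≤ Real.cos β := Real.neg_one_le_cos β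
  have hc2 : Real.cos β ≤ 1 := Real.cos_le_one β
  have hz : (0:ℝ) < 1 + y ^ 2 := by positivity
  simp only [f0beta]
  set s := Real.sqrt (1 + Real.cos β * y ^ 4 / 2 + y ^ 8 / 16) with hsdef
  have hs0 : 0 ≤ s := Real.sqrt_nonneg _
  have hs2 : s ^ 2 = 1 + Real.cos β * y ^ 4 / 2 + y ^ 8 / 16 :=
    Real.sq_sqrt (radicand_nonneg hc1 y)
  have hA0 : 0 ≤ y ^ 4 / 4 + Real.cos β + s := by
    rw [hsdef]; exact A_nonneg hc1 hc2 y
  set u := 1 / Real.sqrt 2 * Real.sqrt (y ^ 4 / 4 + Real.cos β + s) with hudef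
  have hu0 : 0 ≤ u := by positivity
  have hu2 : u ^ 2 = (y ^ 4 / 4 + Real.cos β + s) / 2 := by
    rw [hudef, mul_pow, div_pow, one_pow, Real.sq_sqrt (by norm_num : (0:ℝ) ≤ 2),
      Real.sq_sqrt hA0]
    ring
  have key := bound_key hc1 hc2 hs0 hs2 hu0 hu2
  rw [show (25:ℝ) * (1 + y ^ 2)⁻¹ = 25 / (1 + y ^ 2) from (div_eq_mul_inv _ _).symm,
    le_div_iff₀ hz]
  exact key

lemma f0beta_integrable (β : ℝ) : Integrable (f0beta β) := by
  have hcont : Continuous (f0beta β) := by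
    unfold f0beta
    have h1 : Continuous fun y : ℝ => 1 + Real.cos β * y ^ 4 / 2 + y ^ 8 / 16 := by continuity
    have h2 : Continuous fun y : ℝ => y ^ 4 / 4 + Real.cos β +
        Real.sqrt (1 + Real.cos β * y ^ 4 / 2 + y ^ 8 / 16) :=
      Continuous.add (by continuity) (Real.continuous_sqrt.comp h1)
    exact Continuous.sub (Continuous.mul continuous_const (Real.continuous_sqrt.comp h2))
      (by continuity)
  refine (integrable_inv_one_add_sq.const_mul 25).mono' hcont.aestronglyMeasurable ?_
  filter_upwards with y
  rw [Real.norm_eq_abs]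
  exact f0beta_abs_le β y

lemma f0beta_lt {β₁ β₂ : ℝ} (h : Real.cos β₂ < Real.cos β₁) (y : ℝ) :
    f0beta β₂ y < f0beta β₁ y := by
  have hc1 : -1 ≤ Real.cos β₂ := Real.neg_one_le_cos β₂
  have hc2 : Real.cos β₂ ≤ 1 := Real.cos_le_one β₂
  have hy4 : (0:ℝ) ≤ y ^ 4 := by positivity
  have hR : (1 + Real.cos β₂ * y ^ 4 / 2 + y ^ 8 / 16) ≤
      (1 + Real.cos β₁ * y ^ 4 / 2 + y ^ 8 / 16) := by nlinarith
  have hs : Real.sqrt (1 + Real.cos β₂ * y ^ 4 / 2 + y ^ 8 / 16) ≤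
      Real.sqrt (1 + Real.cos β₁ * y ^ 4 / 2 + y ^ 8 / 16) := Real.sqrt_le_sqrt hR
  have hA : y ^ 4 / 4 + Real.cos β₂ + Real.sqrt (1 + Real.cos β₂ * y ^ 4 / 2 + y ^ 8 / 16) <
      y ^ 4 / 4 + Real.cos β₁ + Real.sqrt (1 + Real.cos β₁ * y ^ 4 / 2 + y ^ 8 / 16) := by
    linarith
  have hsq := Real.sqrt_lt_sqrt (A_nonneg hc1 hc2 y) hA
  have hw : (0:ℝ) < 1 / Real.sqrt 2 := by positivity
  unfold f0beta
  have := mul_lt_mul_of_pos_left hsq hw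
  linarith

lemma f0beta_pos {β : ℝ} (hc : 0 ≤ Real.cos β) (y : ℝ) : 0 < f0beta β y := by
  set c := Real.cos β with hcdef
  have hc2 : c ≤ 1 := Real.cos_le_one β
  have hy4 : (0:ℝ) ≤ y ^ 4 := by positivity
  have hR0 : 0 ≤ 1 + c * y ^ 4 / 2 + y ^ 8 / 16 := by nlinarith
  set s := Real.sqrt (1 + c * y ^ 4 / 2 + y ^ 8 / 16) with hsdef
  have hs0 : 0 ≤ s := Real.sqrt_nonneg _
  have hs2 : s ^ 2 = 1 + c * y ^ 4 / 2 + y ^ 8 / 16 := Real.sq_sqrt hR0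
  have hst : y ^ 4 / 4 < s := by nlinarith
  have hA : (y ^ 2 / 2) ^ 2 * 2 < y ^ 4 / 4 + c + s := by nlinarith
  have hApos : 0 ≤ y ^ 4 / 4 + c + s := by positivity
  set a := Real.sqrt (y ^ 4 / 4 + c + s) with hadef
  have ha0 : 0 ≤ a := Real.sqrt_nonneg _
  have ha2 : a ^ 2 = y ^ 4 / 4 + c + s := Real.sq_sqrt hApos
  have hw0 : (0:ℝ) < Real.sqrt 2 := Real.sqrt_pos.mpr (by norm_num)
  have hw2 : Real.sqrt 2 ^ 2 = 2 := Real.sq_sqrt (by norm_num)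
  have hkey : y ^ 2 / 2 < 1 / Real.sqrt 2 * a := by
    have h2 : (y ^ 2 / 2) ^ 2 < (1 / Real.sqrt 2 * a) ^ 2 := by
      rw [mul_pow, one_div, inv_pow, hw2, ha2]
      nlinarith
    exact lt_of_pow_lt_pow_left₀ 2 (by positivity) h2
  unfold f0beta
  rw [← hcdef, ← hsdef, ← hadef]
  linarith

lemma integral_f0beta_pos {β : ℝ} (hc : 0 ≤ Real.cos β) : 0 < ∫ y : ℝ, f0beta β y := by
  rw [integral_pos_iff_support_of_nonneg_ae
    (Filter.Eventually.of_forall fun y => (f0beta_pos hc y).le) (f0beta_integrable β)]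
  have : Function.support (f0beta β) = Set.univ :=
    Set.eq_univ_of_forall fun y => (f0beta_pos hc y).ne'
  rw [this, Real.volume_univ]
  exact ENNReal.zero_lt_top

/-- c is even, strictly decreasing on [0,π), f₀^{(β)} > 0 pointwise for |β| ≤ π/2,
and c(β) > 0 for |β| ≤ π/2. -/
theorem cbeta_monotone_and_positive :
    (∀ β : ℝ, |β| < Real.pi → cbeta (-β) = cbeta β) ∧
    (∀ β₁ β₂ : ℝ, 0 ≤ β₁ → β₁ < β₂ → β₂ < Real.pi → cbeta β₂ < cbeta β₁) ∧
    (∀ β : ℝ, |β| ≤ Real.pi / 2 → ∀ y : ℝ, 0 < f0beta β y) ∧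
    (∀ β : ℝ, |β| ≤ Real.pi / 2 → 0 < cbeta β) := by
  have habs : ∀ β : ℝ, |β| ≤ Real.pi / 2 → 0 ≤ Real.cos β := fun β hβ =>
    Real.cos_nonneg_of_mem_Icc ⟨neg_le_of_abs_le hβ |>.trans_eq' rfl |> fun h => by
      linarith [neg_le_of_abs_le hβ], le_of_abs_le hβ⟩
  refine ⟨fun β _ => ?_, fun β₁ β₂ h0 h12 h2π => ?_, fun β hβ y => f0beta_pos (habs β hβ) y,
    fun β hβ => integral_f0beta_pos (habs β hβ)⟩
  · unfold cbeta
    congr 1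
    funext y
    simp [f0beta]
  · have hcos : Real.cos β₂ < Real.cos β₁ :=
      Real.strictAntiOn_cos ⟨h0, by linarith⟩ ⟨by linarith, h2π.le⟩ h12
    have hsub : 0 < cbeta β₁ - cbeta β₂ := by
      unfold cbeta
      rw [← integral_sub (f0beta_integrable β₁) (f0beta_integrable β₂)]
      rw [integral_pos_iff_support_of_nonneg_ae
        (Filter.Eventually.of_forall fun y => sub_nonneg.mpr (f0beta_lt hcos y).le)
        ((f0beta_integrable β₁).sub (f0beta_integrable β₂))]
      have : (Function.support fun y => f0beta β₁ y - f0beta β₂ y) = Set.univ :=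
        Set.eq_univ_of_forall fun y => sub_ne_zero.mpr (f0beta_lt hcos y).ne'
      rw [this, Real.volume_univ]
      exact ENNReal.zero_lt_top
    linarith
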